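/- Let p be a prime not dividing N, and λ an integer with 1 ≤ λ ≤ p. If μ is an integer with Nμ ≡ 1 (mod p), then there exists V ∈ Γ_0(pN) and an Atkin–Lehner matrix W_p = [[ap, b],[cpN, dp]] with integer entries and determinant p, such that [[1, λ],[N, Nλ+1]] = V · W_p · [[1/p, (λ+μ)/p],[0, 1]]. -/

import Mathlib

open Matrix CongruenceSubgroup
open scoped MatrixGroups

/-! One can take `V = 1` and `W_p = !![p, -μ; pN, 1 - Nμ]`: the congruence `Nμ ≡ 1 (mod p)` makes
`1 - Nμ = dp` for an integer `d`, the determinant is `p(1 - Nμ) + pNμ = p`, and multiplying out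
`W_p · !![1/p, (λ+μ)/p; 0, 1]` gives `!![1, λ; N, Nλ+1]`. -/

theorem atkinLehner_mul_eq {K : Type*} [Field K] {p : K} (hp : p ≠ 0) (N μ lam : K) :
    !![p, -μ; p * N, 1 - N * μ] * !![1 / p, (lam + μ) / p; 0, 1] =
      !![1, lam; N, N * lam + 1] := by
  ext i j
  fin_cases i <;> fin_cases j <;> simp [Matrix.mul_apply] <;> field_simp <;> ring

theorem coset_rep_atkin_lehner_decomposition_general (p N : ℕ) (hp : p.Prime)
    (lam : ℤ) (μ : ℤ)
    (hμ : (N : ℤ) * μ ≡ 1 [ZMOD p]) :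
    ∃ V : SL(2, ℤ), V ∈ Gamma0 (p * N) ∧
      ∃ a b c d : ℤ,
        (a * p) * (d * p) - b * (c * p * N) = p ∧
        (!![(1 : ℚ), (lam : ℚ); (N : ℚ), (N : ℚ) * lam + 1]) =
          ((V : Matrix (Fin 2) (Fin 2) ℤ).map (Int.cast : ℤ → ℚ)) *
            (!![(a : ℚ) * p, (b : ℚ); (c : ℚ) * p * N, (d : ℚ) * p]) *
            !![1 / (p : ℚ), ((lam : ℚ) + μ) / p; 0, 1] := by
  obtain ⟨k, hk⟩ : (p : ℤ) ∣ N * μ - 1 := hμ.symm.dvd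
  have hkq : ((-k : ℤ) : ℚ) * p = 1 - N * μ := by
    have := congrArg (Int.cast : ℤ → ℚ) hk
    push_cast at this ⊢
    linarith
  refine ⟨1, Subgroup.one_mem _, 1, -μ, 1, -k, by linear_combination (p : ℤ) * hk, ?_⟩
  rw [hkq]
  simpa using
    (atkinLehner_mul_eq (Nat.cast_ne_zero.mpr hp.ne_zero) (N : ℚ) μ lam).symm

/-- Let `p ∤ N` be prime, `1 ≤ λ ≤ p`, and `μ` with `Nμ ≡ 1 (mod p)`.  Then there exist
`V ∈ Γ₀(pN)` and an Atkin–Lehner matrix `W_p = [[ap, b],[cpN, dp]]` of determinant `p`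
such that `[[1, λ],[N, Nλ+1]] = V · W_p · [[1/p, (λ+μ)/p],[0, 1]]` over `ℚ`. -/
theorem coset_rep_atkin_lehner_decomposition (p N : ℕ) (hp : p.Prime) (hpN : ¬ p ∣ N)
    (hN : 0 < N) (lam : ℤ) (hlam : 1 ≤ lam ∧ lam ≤ p) (μ : ℤ)
    (hμ : (N : ℤ) * μ ≡ 1 [ZMOD p]) :
    ∃ V : SL(2, ℤ), V ∈ Gamma0 (p * N) ∧
      ∃ a b c d : ℤ,
        (a * p) * (d * p) - b * (c * p * N) = p ∧
        (!![(1 : ℚ), (lam : ℚ); (N : ℚ), (N : ℚ) * lam + 1]) =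
          ((V : Matrix (Fin 2) (Fin 2) ℤ).map (Int.cast : ℤ → ℚ)) *
            (!![(a : ℚ) * p, (b : ℚ); (c : ℚ) * p * N, (d : ℚ) * p]) *
            !![1 / (p : ℚ), ((lam : ℚ) + μ) / p; 0, 1] :=
  coset_rep_atkin_lehner_decomposition_general p N hp lam μ hμ
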